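/- arXiv:2008.11765 — 2 statements merged into one kernel-verified Lean document; each statement's English description precedes it below -/
import Mathlib

section
/- Let k > 0 and μ ∈ (0,1), and let ν denote the PGN(μ,k) distribution and β the Beta(2μ, 2(1−μ)) distribution. Then ν((0,∞)) = β((0,1/2)) and ν((−∞,0)) = β((1/2,1)). In particular, the probabilities ν((0,∞)) and ν((−∞,0)) do not depend on k. -/
open MeasureTheory Real Set

/-- Density of the chi-squared distribution with `k` degrees of freedom. -/
noncomputable def chiSqDensity (k : ℝ) (v : ℝ) : ℝ :=
  if 0 < v then v ^ (k / 2 - 1) * Real.exp (-v / 2) / ((2 : ℝ) ^ (k / 2) * Real.Gamma (k / 2))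
  else 0

/-- The Beta function `B(a,b) = Γ(a)Γ(b)/Γ(a+b)`. -/
noncomputable def realBeta (a b : ℝ) : ℝ := Real.Gamma a * Real.Gamma b / Real.Gamma (a + b)

/-- Density of the Beta(2μ, 2(1-μ)) distribution. -/
noncomputable def betaDensity (μ : ℝ) (u : ℝ) : ℝ :=
  if 0 < u ∧ u < 1 then
    u ^ (2 * μ - 1) * (1 - u) ^ (1 - 2 * μ) / realBeta (2 * μ) (2 * (1 - μ))
  else 0

/-- The chi-squared distribution with `k` degrees of freedom, as a measure on ℝ. -/
noncomputable def chiSqMeasure (k : ℝ) : Measure ℝ :=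
  volume.withDensity (fun v => ENNReal.ofReal (chiSqDensity k v))

/-- The Beta(2μ, 2(1-μ)) distribution, as a measure on ℝ. -/
noncomputable def betaMeasure (μ : ℝ) : Measure ℝ :=
  volume.withDensity (fun u => ENNReal.ofReal (betaDensity μ u))

/-- The polar-generalized normal distribution PGN(μ, k): the pushforward of
(chi-squared k) ⊗ (Beta(2μ, 2(1-μ))) under `(v, u) ↦ √v · cos (π u)`. -/
noncomputable def PGN (μ k : ℝ) : Measure ℝ :=
  Measure.map (fun p : ℝ × ℝ => Real.sqrt p.1 * Real.cos (π * p.2))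
    ((chiSqMeasure k).prod (betaMeasure μ))

/-! Since `√v ≥ 0`, the sign of `√v · cos (π u)` is that of `cos (π u)` on the event `v > 0`,
which has full χ²-mass. Hence `ν (0, ∞) = β {u | cos (π u) > 0}`, and on the support `(0, 1)` of
`β` the cosine is positive exactly on `(0, 1/2)` (and negative exactly on `(1/2, 1)`). -/

lemma chiSqDensity_eq_gammaPDFReal (k : ℝ) {v : ℝ} (hv : v ≠ 0) :
    chiSqDensity k v = ProbabilityTheory.gammaPDFReal (k / 2) (1 / 2) v := by
  rcases hv.lt_or_gt with hv | hv
  · simp [chiSqDensity, ProbabilityTheory.gammaPDFReal, hv.not_gt, hv.not_ge]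
  · rw [chiSqDensity, ProbabilityTheory.gammaPDFReal, if_pos hv, if_pos hv.le, one_div,
      inv_rpow zero_le_two]
    ring_nf

lemma chiSqMeasure_eq_gammaMeasure (k : ℝ) :
    chiSqMeasure k = ProbabilityTheory.gammaMeasure (k / 2) (1 / 2) :=
  -- at `v = 0` the densities may differ: `0 ^ (k / 2 - 1) = 1` when `k = 2`
  withDensity_congr_ae <| (Measure.ae_ne volume 0).mono fun v hv => by
    simp only [chiSqDensity_eq_gammaPDFReal k hv, ProbabilityTheory.gammaPDF]

lemma isProbabilityMeasure_chiSqMeasure {k : ℝ} (hk : 0 < k) :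
    IsProbabilityMeasure (chiSqMeasure k) := by
  rw [chiSqMeasure_eq_gammaMeasure]
  exact ProbabilityTheory.isProbabilityMeasure_gammaMeasure (by positivity) (by norm_num)

lemma chiSqMeasure_Iic_zero (k : ℝ) : chiSqMeasure k (Iic 0) = 0 := by
  rw [chiSqMeasure, withDensity_apply _ measurableSet_Iic,
    setLIntegral_congr_fun measurableSet_Iic fun v (hv : v ≤ 0) => by
      rw [chiSqDensity, if_neg hv.not_gt, ENNReal.ofReal_zero], lintegral_zero]

lemma chiSqMeasure_Ioi_zero {k : ℝ} (hk : 0 < k) : chiSqMeasure k (Ioi 0) = 1 := by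
  have := isProbabilityMeasure_chiSqMeasure hk
  rw [← compl_Iic, prob_compl_eq_one_iff measurableSet_Iic, chiSqMeasure_Iic_zero]

instance (μ : ℝ) : SFinite (betaMeasure μ) := by
  unfold betaMeasure; infer_instance

lemma measurable_betaDensity (μ : ℝ) : Measurable (betaDensity μ) :=
  Measurable.ite measurableSet_Ioo (by fun_prop) measurable_const

lemma restrict_Ioo_betaMeasure (μ : ℝ) : (betaMeasure μ).restrict (Ioo 0 1) = betaMeasure μ := by
  refine Measure.restrict_eq_self_of_ae_mem ?_
  rw [betaMeasure, ae_withDensity_iff (measurable_betaDensity μ).ennreal_ofReal]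
  refine ae_of_all _ fun u hu => ?_
  by_contra h
  exact hu (by rw [betaDensity, if_neg (show ¬(0 < u ∧ u < 1) from h), ENNReal.ofReal_zero])

lemma betaMeasure_inter_Ioo (μ : ℝ) (s : Set ℝ) :
    betaMeasure μ (s ∩ Ioo 0 1) = betaMeasure μ s := by
  rw [← Measure.restrict_apply' measurableSet_Ioo, restrict_Ioo_betaMeasure]

lemma preimage_sqrt_mul_Ioi {β : Type*} (g : β → ℝ) :
    (fun p : ℝ × β => √p.1 * g p.2) ⁻¹' Ioi 0 = Ioi 0 ×ˢ (g ⁻¹' Ioi 0) := by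
  ext ⟨v, u⟩
  simp [mul_pos_iff, (sqrt_nonneg v).not_gt]

lemma preimage_sqrt_mul_Iio {β : Type*} (g : β → ℝ) :
    (fun p : ℝ × β => √p.1 * g p.2) ⁻¹' Iio 0 = Ioi 0 ×ˢ (g ⁻¹' Iio 0) := by
  ext ⟨v, u⟩
  simp [mul_neg_iff, (sqrt_nonneg v).not_gt]

lemma pi_mul_mem_Icc {u : ℝ} (hu : u ∈ Icc 0 1) : π * u ∈ Icc 0 π :=
  ⟨by nlinarith [pi_pos, hu.1], by nlinarith [pi_pos, hu.2]⟩

lemma cos_pi_mul_pos_iff {u : ℝ} (hu : u ∈ Icc 0 1) : 0 < cos (π * u) ↔ u < 1 / 2 := by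
  rw [← cos_pi_div_two, ← mul_one_div,
    strictAntiOn_cos.lt_iff_gt (pi_mul_mem_Icc (by norm_num)) (pi_mul_mem_Icc hu),
    mul_lt_mul_iff_of_pos_left pi_pos]

lemma cos_pi_mul_neg_iff {u : ℝ} (hu : u ∈ Icc 0 1) : cos (π * u) < 0 ↔ 1 / 2 < u := by
  rw [← cos_pi_div_two, ← mul_one_div,
    strictAntiOn_cos.lt_iff_gt (pi_mul_mem_Icc hu) (pi_mul_mem_Icc (by norm_num)),
    mul_lt_mul_iff_of_pos_left pi_pos]

lemma preimage_cos_pi_mul_Ioi_inter_Ioo :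
    (fun u => cos (π * u)) ⁻¹' Ioi 0 ∩ Ioo 0 1 = Ioo 0 (1 / 2) := by
  ext u
  simp only [mem_inter_iff, mem_preimage, mem_Ioi, mem_Ioo]
  constructor
  · rintro ⟨h, h0, h1⟩
    exact ⟨h0, (cos_pi_mul_pos_iff ⟨h0.le, h1.le⟩).1 h⟩
  · rintro ⟨h0, h1⟩
    exact ⟨(cos_pi_mul_pos_iff ⟨h0.le, by linarith⟩).2 h1, h0, by linarith⟩

lemma preimage_cos_pi_mul_Iio_inter_Ioo :
    (fun u => cos (π * u)) ⁻¹' Iio 0 ∩ Ioo 0 1 = Ioo (1 / 2) 1 := by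
  ext u
  simp only [mem_inter_iff, mem_preimage, mem_Iio, mem_Ioo]
  constructor
  · rintro ⟨h, h0, h1⟩
    exact ⟨(cos_pi_mul_neg_iff ⟨h0.le, h1.le⟩).1 h, h1⟩
  · rintro ⟨h0, h1⟩
    exact ⟨(cos_pi_mul_neg_iff ⟨by linarith, h1.le⟩).2 h0, by linarith, h1⟩

section SqrtMulProd

variable {β : Type*} [MeasurableSpace β] {χ : Measure ℝ} {ν : Measure β} [SFinite ν]
  {g : β → ℝ}

lemma map_sqrt_mul_prod_Ioi (hχ : χ (Ioi 0) = 1) (hg : Measurable g) :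
    (χ.prod ν).map (fun p => √p.1 * g p.2) (Ioi 0) = ν (g ⁻¹' Ioi 0) := by
  rw [Measure.map_apply (by fun_prop) measurableSet_Ioi, preimage_sqrt_mul_Ioi,
    Measure.prod_prod, hχ, one_mul]

lemma map_sqrt_mul_prod_Iio (hχ : χ (Ioi 0) = 1) (hg : Measurable g) :
    (χ.prod ν).map (fun p => √p.1 * g p.2) (Iio 0) = ν (g ⁻¹' Iio 0) := by
  rw [Measure.map_apply (by fun_prop) measurableSet_Iio, preimage_sqrt_mul_Iio,
    Measure.prod_prod, hχ, one_mul]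

end SqrtMulProd

theorem stmt8_general (k μ : ℝ) (hk : 0 < k) :
    PGN μ k (Set.Ioi 0) = betaMeasure μ (Set.Ioo 0 (1/2)) ∧
    PGN μ k (Set.Iio 0) = betaMeasure μ (Set.Ioo (1/2) 1) := by
  have hcos : Measurable fun u : ℝ => cos (π * u) := by fun_prop
  rw [PGN, map_sqrt_mul_prod_Ioi (chiSqMeasure_Ioi_zero hk) hcos,
    map_sqrt_mul_prod_Iio (chiSqMeasure_Ioi_zero hk) hcos,
    ← preimage_cos_pi_mul_Ioi_inter_Ioo, ← preimage_cos_pi_mul_Iio_inter_Ioo,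
    betaMeasure_inter_Ioo, betaMeasure_inter_Ioo]
  exact ⟨rfl, rfl⟩

theorem stmt8 (k μ : ℝ) (hk : 0 < k) (hμ : μ ∈ Set.Ioo (0:ℝ) 1) :
    PGN μ k (Set.Ioi 0) = betaMeasure μ (Set.Ioo 0 (1/2)) ∧
    PGN μ k (Set.Iio 0) = betaMeasure μ (Set.Ioo (1/2) 1) :=
  stmt8_general k μ hk
end

section
/- Let k > 0, μ ∈ (0,1), and m ∈ ℕ with m ≥ 1. Then the m-th moment of the PGN(μ,k) distribution ν exists (the function x ↦ |x|^m is ν-integrable) and ∫ x^m dν(x) = 2^{m/2} · (Γ((k+m)/2)/Γ(k/2)) · ∫_0^1 cos(πu)^m · f_U(u) du, where f_U is the density of the Beta(2μ, 2(1−μ)) distribution. -/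
open MeasureTheory Real Set

/-! Under `(v, u) ↦ √v · cos (π u)` the `m`-th power of the image splits as
`√v ^ m · cos (π u) ^ m`, so by Fubini the moment of `PGN μ k` is the product of the `m/2`-th
moment of the chi-squared law, a Gamma integral `2 ^ (m/2) Γ((k+m)/2) / Γ(k/2)`, and the `m`-th
moment of `cos (π U)` under the Beta law, which is finite because `|cos| ≤ 1` and
the Beta density is integrable. -/

lemma integrableOn_rpow_mul_one_sub_rpow {a b : ℝ} (ha : -1 < a) (hb : -1 < b) :
    IntegrableOn (fun u : ℝ => u ^ a * (1 - u) ^ b) (Ioo 0 1) := by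
  have hF := Complex.betaIntegral_convergent (u := (a + 1 : ℝ)) (v := (b + 1 : ℝ))
    (by simp only [Complex.ofReal_re]; linarith) (by simp only [Complex.ofReal_re]; linarith)
  rw [intervalIntegrable_iff_integrableOn_Ioo_of_le zero_le_one] at hF
  refine IntegrableOn.congr_fun hF.re (fun u hu => ?_) measurableSet_Ioo
  simp only [RCLike.re_to_complex, Complex.ofReal_add, Complex.ofReal_one, add_sub_cancel_right]
  rw [← Complex.ofReal_cpow hu.1.le, ← Complex.ofReal_one, ← Complex.ofReal_sub,
    ← Complex.ofReal_cpow (by linarith [hu.2]), ← Complex.ofReal_mul, Complex.ofReal_re]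

section WithDensity

variable {α : Type*} [MeasurableSpace α] {ρ : Measure α} {d : α → ℝ}

lemma integral_withDensity_ofReal (hd : Measurable d) (hd0 : ∀ x, 0 ≤ d x) (g : α → ℝ) :
    ∫ x, g x ∂ρ.withDensity (fun x => ENNReal.ofReal (d x)) = ∫ x, g x * d x ∂ρ := by
  rw [integral_withDensity_eq_integral_toReal_smul hd.ennreal_ofReal
    (ae_of_all _ fun _ => ENNReal.ofReal_lt_top)]
  simp only [ENNReal.toReal_ofReal (hd0 _), smul_eq_mul, mul_comm]

lemma integrable_withDensity_ofReal_iff (hd : Measurable d) (hd0 : ∀ x, 0 ≤ d x)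
    {g : α → ℝ} :
    Integrable g (ρ.withDensity fun x => ENNReal.ofReal (d x)) ↔
      Integrable (fun x => g x * d x) ρ := by
  rw [integrable_withDensity_iff_integrable_smul' hd.ennreal_ofReal
    (ae_of_all _ fun _ => ENNReal.ofReal_lt_top)]
  simp only [ENNReal.toReal_ofReal (hd0 _), smul_eq_mul, mul_comm]

end WithDensity

section MapProd

variable {α β : Type*} [MeasurableSpace α] [MeasurableSpace β] {ρ : Measure α}
  {ν : Measure β} {f : α → ℝ} {g : β → ℝ}

lemma integral_pow_map_mul_prod [SFinite ρ] [SFinite ν] (hf : Measurable f) (hg : Measurable g)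
    (m : ℕ) :
    ∫ x : ℝ, x ^ m ∂(ρ.prod ν).map (fun p => f p.1 * g p.2) =
      (∫ a, f a ^ m ∂ρ) * ∫ b, g b ^ m ∂ν := by
  rw [integral_map (by fun_prop) (by fun_prop)]
  simp only [mul_pow]
  exact integral_prod_mul (fun a => f a ^ m) (fun b => g b ^ m)

lemma integrable_abs_pow_map_mul_prod (hf : Measurable f) (hg : Measurable g) {m : ℕ}
    (hfm : Integrable (fun a => |f a| ^ m) ρ) (hgm : Integrable (fun b => |g b| ^ m) ν) :
    Integrable (fun x : ℝ => |x| ^ m) ((ρ.prod ν).map fun p => f p.1 * g p.2) := by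
  rw [integrable_map_measure (g := fun x : ℝ => |x| ^ m) (by fun_prop) (by fun_prop)]
  simpa only [Function.comp_def, abs_mul, mul_pow] using hfm.mul_prod hgm

end MapProd

instance (k : ℝ) : SFinite (chiSqMeasure k) := by unfold chiSqMeasure; infer_instance

lemma measurable_chiSqDensity (k : ℝ) : Measurable (chiSqDensity k) :=
  Measurable.ite measurableSet_Ioi (by fun_prop) measurable_const

lemma chiSqDensity_nonneg {k : ℝ} (hk : 0 < k) (v : ℝ) : 0 ≤ chiSqDensity k v := by
  have := Gamma_pos_of_pos (half_pos hk)
  unfold chiSqDensity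
  split_ifs <;> positivity

lemma sqrt_pow_mul_chiSqDensity (k : ℝ) (m : ℕ) :
    (fun v => √v ^ m * chiSqDensity k v) = (Ioi 0).indicator fun v =>
      v ^ ((k + m) / 2 - 1) * exp (-(1 / 2 * v)) / (2 ^ (k / 2) * Gamma (k / 2)) := by
  ext v
  by_cases hv : 0 < v
  · rw [indicator_of_mem (mem_Ioi.2 hv), chiSqDensity, if_pos hv, sqrt_eq_rpow,
      ← rpow_mul_natCast hv.le, mul_div_assoc', ← mul_assoc, ← rpow_add hv]
    ring_nf
  · rw [indicator_of_notMem (notMem_Ioi.2 (not_lt.1 hv)), chiSqDensity, if_neg hv, mul_zero]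

lemma integral_sqrt_pow_mul_chiSqDensity {k : ℝ} (hk : 0 < k) (m : ℕ) :
    ∫ v, √v ^ m * chiSqDensity k v =
      2 ^ ((m : ℝ) / 2) * (Gamma ((k + m) / 2) / Gamma (k / 2)) := by
  have hkm : 0 < (k + m) / 2 := by positivity
  rw [sqrt_pow_mul_chiSqDensity, integral_indicator measurableSet_Ioi, integral_div,
    integral_rpow_mul_exp_neg_mul_Ioi hkm one_half_pos, one_div_one_div, add_div,
    rpow_add two_pos]
  have := Gamma_pos_of_pos (half_pos hk)
  field_simp

lemma integrable_sqrt_pow_mul_chiSqDensity {k : ℝ} (hk : 0 < k) (m : ℕ) :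
    Integrable fun v => √v ^ m * chiSqDensity k v := by
  -- a non-integrable function has Bochner integral `0`, and the Gamma integral is positive
  refine Integrable.of_integral_ne_zero ?_
  rw [integral_sqrt_pow_mul_chiSqDensity hk]
  have := Gamma_pos_of_pos (half_pos hk)
  have : 0 < Gamma ((k + m) / 2) := Gamma_pos_of_pos (by positivity)
  positivity

lemma integral_sqrt_pow_chiSqMeasure {k : ℝ} (hk : 0 < k) (m : ℕ) :
    ∫ v, √v ^ m ∂chiSqMeasure k =
      2 ^ ((m : ℝ) / 2) * (Gamma ((k + m) / 2) / Gamma (k / 2)) := by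
  rw [chiSqMeasure,
    integral_withDensity_ofReal (measurable_chiSqDensity k) (chiSqDensity_nonneg hk),
    integral_sqrt_pow_mul_chiSqDensity hk]

lemma integrable_sqrt_pow_chiSqMeasure {k : ℝ} (hk : 0 < k) (m : ℕ) :
    Integrable (fun v => √v ^ m) (chiSqMeasure k) := by
  rw [chiSqMeasure, integrable_withDensity_ofReal_iff (measurable_chiSqDensity k)
    (chiSqDensity_nonneg hk)]
  exact integrable_sqrt_pow_mul_chiSqDensity hk m

lemma realBeta_pos {a b : ℝ} (ha : 0 < a) (hb : 0 < b) : 0 < realBeta a b := by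
  have := Gamma_pos_of_pos ha
  have := Gamma_pos_of_pos hb
  have := Gamma_pos_of_pos (add_pos ha hb)
  unfold realBeta
  positivity

lemma betaDensity_eq_indicator (μ : ℝ) : betaDensity μ = (Ioo 0 1).indicator fun u =>
    u ^ (2 * μ - 1) * (1 - u) ^ (1 - 2 * μ) / realBeta (2 * μ) (2 * (1 - μ)) := by
  ext u
  simp only [betaDensity, indicator, mem_Ioo]

section Beta

variable {μ : ℝ}

lemma betaDensity_nonneg (hμ : μ ∈ Ioo 0 1) (u : ℝ) : 0 ≤ betaDensity μ u := by
  have := realBeta_pos (a := 2 * μ) (b := 2 * (1 - μ)) (by linarith [hμ.1]) (by linarith [hμ.2])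
  rw [betaDensity_eq_indicator]
  refine indicator_nonneg (fun u hu => ?_) u
  have : 0 < 1 - u := sub_pos.2 hu.2
  have := hu.1
  positivity

lemma integrable_betaDensity (hμ : μ ∈ Ioo 0 1) : Integrable (betaDensity μ) := by
  rw [betaDensity_eq_indicator, integrable_indicator_iff measurableSet_Ioo]
  exact (integrableOn_rpow_mul_one_sub_rpow (by linarith [hμ.1]) (by linarith [hμ.2])).div_const _

lemma isFiniteMeasure_betaMeasure (hμ : μ ∈ Ioo 0 1) : IsFiniteMeasure (betaMeasure μ) :=
  isFiniteMeasure_withDensity_ofReal (integrable_betaDensity hμ).hasFiniteIntegral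

lemma integral_betaMeasure (hμ : μ ∈ Ioo 0 1) (g : ℝ → ℝ) :
    ∫ u, g u ∂betaMeasure μ = ∫ u in (0 : ℝ)..1, g u * betaDensity μ u := by
  rw [betaMeasure,
    integral_withDensity_ofReal (measurable_betaDensity μ) (betaDensity_nonneg hμ),
    intervalIntegral.integral_of_le zero_le_one, setIntegral_eq_integral_of_forall_compl_eq_zero]
  intro u hu
  rw [betaDensity_eq_indicator, indicator_of_notMem (fun h => hu (Ioo_subset_Ioc_self h)), mul_zero]

end Beta

theorem stmt14_general (k μ : ℝ) (hk : 0 < k) (hμ : μ ∈ Set.Ioo (0:ℝ) 1) (m : ℕ) :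
    Integrable (fun x : ℝ => |x| ^ m) (PGN μ k) ∧
    (∫ x, x ^ m ∂(PGN μ k)) =
      (2 : ℝ) ^ ((m : ℝ) / 2) * (Real.Gamma ((k + m) / 2) / Real.Gamma (k / 2)) *
        ∫ u in (0 : ℝ)..1, Real.cos (π * u) ^ m * betaDensity μ u := by
  have := isFiniteMeasure_betaMeasure hμ
  have hcos : Measurable fun u : ℝ => cos (π * u) := by fun_prop
  refine ⟨integrable_abs_pow_map_mul_prod continuous_sqrt.measurable hcos ?_ ?_, ?_⟩
  · simpa only [abs_of_nonneg (sqrt_nonneg _)] using integrable_sqrt_pow_chiSqMeasure hk m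
  · refine Integrable.of_bound (by fun_prop) 1 (ae_of_all _ fun u => ?_)
    simpa using pow_le_one₀ (abs_nonneg _) (abs_cos_le_one (π * u))
  · rw [PGN, integral_pow_map_mul_prod continuous_sqrt.measurable hcos,
      integral_sqrt_pow_chiSqMeasure hk, integral_betaMeasure hμ]

theorem stmt14 (k μ : ℝ) (hk : 0 < k) (hμ : μ ∈ Set.Ioo (0:ℝ) 1) (m : ℕ) (hm : 1 ≤ m) :
    Integrable (fun x : ℝ => |x| ^ m) (PGN μ k) ∧
    (∫ x, x ^ m ∂(PGN μ k)) =
      (2 : ℝ) ^ ((m : ℝ) / 2) * (Real.Gamma ((k + m) / 2) / Real.Gamma (k / 2)) *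
        ∫ u in (0 : ℝ)..1, Real.cos (π * u) ^ m * betaDensity μ u :=
  stmt14_general k μ hk hμ m
end
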